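/- Let n be a positive integer, X ∈ 𝒯(n) a triangulation of the punctured n-gon, and a := top(X). Then for every j ∈ {1, …, n}, the projective arc at the residue class of j belongs to X if and only if a'_j = ‖a'‖. (Adachi, Lemma on projective arcs and maximal partial sums, part (1) of the lemma preceding Proposition on injectivity.) -/

import Mathlib

/-!
Combinatorial model of admissible arcs and triangulations of a regular
`n`-gon with one puncture (following Adachi, "The classification of
τ-tilting modules over Nakayama algebras").
-/

namespace Punctured

/-- Admissible arcs in a regular `n`-gon with one puncture:
an *inner arc* `inner i t` runs counterclockwise from vertex `i` to vertex
`i + t` (with `2 ≤ t ≤ n` required for admissibility); a *projective arc*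
`proj j` runs from the puncture to the vertex `j`. -/
inductive Arc (n : ℕ) : Type
  | inner (i : ZMod n) (t : ℕ) : Arc n
  | proj (j : ZMod n) : Arc n

namespace Arc

/-- The terminal point of an admissible arc. -/
def terminal {n : ℕ} : Arc n → ZMod n
  | .inner i t => i + (t : ZMod n)
  | .proj j => j

/-- Admissibility: inner arcs must have length `2 ≤ t ≤ n`. -/
def IsAdmissible {n : ℕ} : Arc n → Prop
  | .inner _ t => 2 ≤ t ∧ t ≤ n
  | .proj _ => True

/-- Compatibility (non-crossing) of two admissible arcs, defined via
lifts to `ℤ`. -/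
def Compatible {n : ℕ} : Arc n → Arc n → Prop
  | .inner i t, .inner k s =>
      ¬ ∃ x y : ℤ, (x : ZMod n) = i ∧ (y : ZMod n) = k ∧
        ((x < y ∧ y < x + (t : ℤ) ∧ x + (t : ℤ) < y + (s : ℤ)) ∨
         (y < x ∧ x < y + (s : ℤ) ∧ y + (s : ℤ) < x + (t : ℤ)))
  | .inner i t, .proj j =>
      ¬ ∃ x y : ℤ, (x : ZMod n) = i ∧ (y : ZMod n) = j ∧ x < y ∧ y < x + (t : ℤ)
  | .proj j, .inner i t =>
      ¬ ∃ x y : ℤ, (x : ZMod n) = i ∧ (y : ZMod n) = j ∧ x < y ∧ y < x + (t : ℤ)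
  | .proj _, .proj _ => True

end Arc

/-- A set of admissible arcs which is pairwise compatible. -/
def PairwiseCompatible (n : ℕ) (X : Set (Arc n)) : Prop :=
  (∀ a ∈ X, a.IsAdmissible) ∧ ∀ a ∈ X, ∀ b ∈ X, a.Compatible b

/-- A triangulation of the punctured `n`-gon: a pairwise compatible set of
admissible arcs, maximal under inclusion among such sets. -/
def IsTriangulation (n : ℕ) (X : Set (Arc n)) : Prop :=
  PairwiseCompatible n X ∧
    ∀ Y : Set (Arc n), PairwiseCompatible n Y → X ⊆ Y → Y = X

/-- `top(X)`: for each residue class `c`, the number of arcs of `X` with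
terminal point `c`. -/
noncomputable def topSeq (n : ℕ) (X : Set (Arc n)) : ZMod n → ℕ :=
  fun c => {arc ∈ X | Arc.terminal arc = c}.ncard

/-- The representative of `p` modulo `n` lying in `{1, …, n}`. -/
def resRep (n : ℕ) (p : ℤ) : ℕ := ((p - 1) % (n : ℤ)).toNat + 1

/-- `a'_p := Σ_{j=1}^{(p)_n} (a_j - 1)`, the `n`-periodic extension of the
partial-sum sequence of `a`. -/
def psum (n : ℕ) (a : ZMod n → ℕ) (p : ℤ) : ℤ :=
  ∑ j ∈ Finset.Icc 1 (resRep n p), ((a ((j : ℕ) : ZMod n) : ℤ) - 1)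

/-- `‖a'‖ := max {a'_1, …, a'_n}`. -/
noncomputable def pnorm (n : ℕ) (a : ZMod n → ℕ) : ℤ :=
  sSup ((fun i : ℕ => psum n a (i : ℤ)) '' Set.Icc 1 n)

/-- `δ_p = 1` if `a'_p = ‖a'‖` and `δ_p = 0` otherwise. -/
noncomputable def deltaInt (n : ℕ) (a : ZMod n → ℕ) (p : ℤ) : ℤ :=
  if psum n a p = pnorm n a then 1 else 0

/-- `k_s^j := max {k ∈ ℤ : k < j - 1 and a'_k = a'_{j-1} + s}`. -/
noncomputable def kmax (n : ℕ) (a : ZMod n → ℕ) (j s : ℤ) : ℤ :=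
  sSup {k : ℤ | k < j - 1 ∧ psum n a k = psum n a (j - 1) + s}

/-- `ℓ_j(a)`. -/
noncomputable def ellj (n : ℕ) (a : ZMod n → ℕ) (j : ℕ) : ℤ :=
  if (a ((j : ℕ) : ZMod n) : ℤ) - deltaInt n a (j : ℤ) = 0 then 0
  else (j : ℤ) - kmax n a (j : ℤ) ((a ((j : ℕ) : ZMod n) : ℤ) - deltaInt n a (j : ℤ))

/-!
Fix a vertex `q` carrying a projective arc of `X` (the terminal point of a longest inner arc is
one). Cutting the punctured polygon open along that arc and lifting to `ℤ`, the arcs of `X` whose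
terminal points lie in `(q, p]` become noncrossing chords of the polygon with vertices
`q, …, p + 1`, the vertex `p + 1` standing for the puncture. Such a dissection has at most `p - q`
chords, and for `p = q + n` maximality of `X` makes it a triangulation of the `(n + 2)`-gon, with
exactly `n` chords. Hence `|X| = n`, so `a'` is the periodic partial-sum sequence and
`a'_p - a'_q = #{arcs ending in (q, p]} - (p - q) ≤ 0`, with equality exactly when the projective
arc at `p` lies in `X` (for the lower bound, count the remaining arcs from `p` up to `q + n`).
-/

def Cross (I J : ℤ × ℤ) : Prop :=
  (I.1 < J.1 ∧ J.1 < I.2 ∧ I.2 < J.2) ∨ (J.1 < I.1 ∧ I.1 < J.2 ∧ J.2 < I.2)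

lemma Cross.symm {I J : ℤ × ℤ} (h : Cross I J) : Cross J I := Or.symm h

structure IsDissection (A B : ℤ) (C : Finset (ℤ × ℤ)) : Prop where
  bounds : ∀ J ∈ C, A ≤ J.1 ∧ J.1 + 2 ≤ J.2 ∧ J.2 ≤ B
  noncross : ∀ I ∈ C, ∀ J ∈ C, ¬ Cross I J

def IsSaturated (A B : ℤ) (C : Finset (ℤ × ℤ)) : Prop :=
  ∀ u v, A ≤ u → u + 2 ≤ v → v ≤ B → (u, v) ∉ C → ∃ J ∈ C, Cross (u, v) J

def chordsIn (A B : ℤ) (C : Finset (ℤ × ℤ)) : Finset (ℤ × ℤ) :=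
  C.filter fun J => A ≤ J.1 ∧ J.2 ≤ B

lemma IsDissection.restrict {A B : ℤ} {C : Finset (ℤ × ℤ)} (hC : IsDissection A B C)
    (A' B' : ℤ) : IsDissection A' B' (chordsIn A' B' C) where
  bounds J hJ := by
    simp only [chordsIn, Finset.mem_filter] at hJ
    exact ⟨hJ.2.1, (hC.bounds J hJ.1).2.1, hJ.2.2⟩
  noncross I hI J hJ := hC.noncross I (Finset.mem_filter.1 hI).1 J (Finset.mem_filter.1 hJ).1

lemma IsSaturated.restrict {A B A' B' : ℤ} {C : Finset (ℤ × ℤ)} (hsat : IsSaturated A B C)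
    (hA : A ≤ A') (hB : B' ≤ B) (hC : ∀ J ∈ C, ¬ Cross (A', B') J) :
    IsSaturated A' B' (chordsIn A' B' C) := by
  intro u v hu huv hv hnot
  have hnotC : (u, v) ∉ C := fun h => hnot (Finset.mem_filter.2 ⟨h, hu, hv⟩)
  obtain ⟨J, hJ, hcross⟩ := hsat u v (by omega) huv (by omega) hnotC
  refine ⟨J, Finset.mem_filter.2 ⟨hJ, ?_⟩, hcross⟩
  have := hC J hJ
  unfold Cross at this hcross
  omega

namespace IsDissection

variable {A B : ℤ} {C : Finset (ℤ × ℤ)}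

lemma eq_empty_of_lt (hC : IsDissection A B C) (hAB : B < A + 2) : C = ∅ :=
  Finset.eq_empty_of_forall_notMem fun J hJ => by have := hC.bounds J hJ; omega

lemma not_cross_outer (hC : IsDissection A B C) {J : ℤ × ℤ} (hJ : J ∈ C) :
    ¬ Cross (A, B) J := by
  have := hC.bounds J hJ
  unfold Cross
  omega

lemma exists_split (hC : IsDissection A B C) (hAB : A + 2 ≤ B) :
    ∃ m, A < m ∧ m < B ∧ ∀ J ∈ C, J ≠ (A, B) → J.2 ≤ m ∨ m ≤ J.1 := by
  -- `m` is the far end of the longest chord at `A` other than `(A, B)`, or `A + 1` if there is none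
  set S := insert (A + 1) ((C.filter fun J => J.1 = A ∧ J.2 < B).image Prod.snd)
  have hS : S.Nonempty := Finset.insert_nonempty _ _
  have hmemS : ∀ J ∈ C, J.1 = A → J.2 < B → J.2 ∈ S := fun J hJ h1 h2 =>
    Finset.mem_insert_of_mem (Finset.mem_image_of_mem _ (Finset.mem_filter.2 ⟨hJ, h1, h2⟩))
  refine ⟨S.max' hS, ?_, ?_, ?_⟩
  · have := S.le_max' _ (Finset.mem_insert_self _ _)
    omega
  · obtain h | h := Finset.mem_insert.1 (S.max'_mem hS)
    · omega
    · obtain ⟨K, hK, hKm⟩ := Finset.mem_image.1 h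
      have := (Finset.mem_filter.1 hK).2
      omega
  · intro J hJ hne
    by_contra! h
    have hJb := hC.bounds J hJ
    have hJ1 : A < J.1 := by
      refine lt_of_le_of_ne hJb.1 fun hA => ?_
      have hJB : J.2 < B := lt_of_le_of_ne hJb.2.2 fun hB => hne (Prod.ext hA.symm hB)
      have := S.le_max' _ (hmemS J hJ hA.symm hJB)
      omega
    obtain hm | hm := Finset.mem_insert.1 (S.max'_mem hS)
    · omega
    · obtain ⟨K, hK, hKm⟩ := Finset.mem_image.1 hm
      obtain ⟨hK, hK1, -⟩ := Finset.mem_filter.1 hK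
      exact hC.noncross K hK J hJ (Or.inl ⟨by omega, by omega, by omega⟩)

lemma erase_outer_eq_union (hC : IsDissection A B C) {m : ℤ}
    (hsplit : ∀ J ∈ C, J ≠ (A, B) → J.2 ≤ m ∨ m ≤ J.1) (hAm : A < m) (hmB : m < B) :
    C.erase (A, B) = chordsIn A m C ∪ chordsIn m B C := by
  ext J
  simp only [Finset.mem_erase, Finset.mem_union, chordsIn, Finset.mem_filter]
  constructor
  · rintro ⟨hne, hJ⟩
    have := hC.bounds J hJ
    rcases hsplit J hJ hne with h | h <;> [left; right] <;> exact ⟨hJ, by omega, by omega⟩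
  · rintro (⟨hJ, h1, h2⟩ | ⟨hJ, h1, h2⟩) <;>
      exact ⟨fun h => by subst h; simp only at h1 h2; omega, hJ⟩

lemma card_erase_outer (hC : IsDissection A B C) {m : ℤ}
    (hsplit : ∀ J ∈ C, J ≠ (A, B) → J.2 ≤ m ∨ m ≤ J.1) (hAm : A < m) (hmB : m < B) :
    (C.erase (A, B)).card = (chordsIn A m C).card + (chordsIn m B C).card := by
  rw [hC.erase_outer_eq_union hsplit hAm hmB, Finset.card_union_of_disjoint]
  simp only [chordsIn, Finset.disjoint_filter]
  intro J hJ h1 h2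
  have := hC.bounds J hJ
  omega

theorem card_le {A B : ℤ} {C : Finset (ℤ × ℤ)} (hC : IsDissection A B C) (hAB : A < B) :
    (C.card : ℤ) ≤ B - A - 1 := by
  rcases lt_or_ge B (A + 2) with hsmall | hbig
  · rw [hC.eq_empty_of_lt hsmall, Finset.card_empty]
    omega
  obtain ⟨m, hAm, hmB, hsplit⟩ := hC.exists_split hbig
  have hL := (hC.restrict A m).card_le hAm
  have hR := (hC.restrict m B).card_le hmB
  have hcard := hC.card_erase_outer hsplit hAm hmB
  have := Finset.pred_card_le_card_erase (s := C) (a := (A, B))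
  omega
termination_by (B - A).toNat

theorem le_card {A B : ℤ} {C : Finset (ℤ × ℤ)} (hC : IsDissection A B C)
    (hsat : IsSaturated A B C) :
    B - A - 1 ≤ (C.card : ℤ) := by
  rcases lt_or_ge B (A + 2) with hsmall | hbig
  · omega
  have hout : (A, B) ∈ C := by
    by_contra hnot
    obtain ⟨J, hJ, hcross⟩ := hsat A B le_rfl hbig le_rfl hnot
    exact hC.not_cross_outer hJ hcross
  obtain ⟨m, hAm, hmB, hsplit⟩ := hC.exists_split hbig
  have hnc : ∀ J ∈ C, ¬ Cross (A, m) J ∧ ¬ Cross (m, B) J := by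
    intro J hJ
    have := hC.bounds J hJ
    rcases eq_or_ne J (A, B) with rfl | hne
    · simp only [Cross]
      omega
    · have := hsplit J hJ hne
      simp only [Cross]
      omega
  have hL := (hC.restrict A m).le_card (hsat.restrict le_rfl hmB.le fun J hJ => (hnc J hJ).1)
  have hR := (hC.restrict m B).le_card (hsat.restrict hAm.le le_rfl fun J hJ => (hnc J hJ).2)
  have hcard := hC.card_erase_outer hsplit hAm hmB
  have := Finset.card_erase_add_one hout
  omega
termination_by (B - A).toNat

lemma insert_outer (hC : IsDissection A B C) (hAB : A + 2 ≤ B) :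
    IsDissection A B (insert (A, B) C) where
  bounds J hJ := by
    rcases Finset.mem_insert.1 hJ with rfl | hJ
    exacts [⟨le_rfl, hAB, le_rfl⟩, hC.bounds J hJ]
  noncross I hI J hJ := by
    rcases Finset.mem_insert.1 hI with rfl | hI <;> rcases Finset.mem_insert.1 hJ with rfl | hJ
    · simp [Cross]
    · exact hC.not_cross_outer hJ
    · exact fun h => hC.not_cross_outer hI h.symm
    · exact hC.noncross I hI J hJ

end IsDissection

section Lift

variable {n : ℕ}

lemma eq_of_intCast_eq {a b : ℤ} (h : (a : ZMod n) = b) (h₁ : a < b + n) (h₂ : b < a + n) :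
    a = b := by
  have := Int.eq_zero_of_abs_lt_dvd ((ZMod.intCast_eq_intCast_iff_dvd_sub a b n).1 h)
    (abs_lt.2 ⟨by omega, by omega⟩)
  omega

def windowLift (n : ℕ) (y : ℤ) (c : ZMod n) : ℤ := y + 1 + ((c.cast : ℤ) - (y + 1)) % n

@[simp]
lemma windowLift_cast (y : ℤ) (c : ZMod n) : ((windowLift n y c : ℤ) : ZMod n) = c := by
  simp [windowLift, Int.emod_def]

variable [NeZero n]

lemma windowLift_mem (y : ℤ) (c : ZMod n) : y < windowLift n y c ∧ windowLift n y c ≤ y + n := by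
  have hn : (0 : ℤ) < n := by exact_mod_cast Nat.pos_of_neZero n
  have := Int.emod_nonneg ((c.cast : ℤ) - (y + 1)) hn.ne'
  have := Int.emod_lt_of_pos ((c.cast : ℤ) - (y + 1)) hn
  unfold windowLift
  omega

lemma eq_windowLift {y z : ℤ} {c : ZMod n} (hz : (z : ZMod n) = c) (h₁ : y < z) (h₂ : z ≤ y + n) :
    z = windowLift n y c := by
  have := windowLift_mem y c
  exact eq_of_intCast_eq (by rw [hz, windowLift_cast]) (by omega) (by omega)

lemma windowLift_intCast {y z : ℤ} (h₁ : y < z) (h₂ : z ≤ y + n) : windowLift n y z = z :=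
  (eq_windowLift rfl h₁ h₂).symm

end Lift

namespace Arc

variable {n : ℕ}

lemma Compatible.symm {α β : Arc n} (h : α.Compatible β) : β.Compatible α := by
  cases α <;> cases β
  · rintro ⟨x, y, hx, hy, hcross⟩
    exact h ⟨y, x, hy, hx, hcross.symm⟩
  all_goals exact h

lemma compatible_inner_self {i : ZMod n} {t : ℕ} (ht : t ≤ n) :
    (inner i t).Compatible (inner i t) := by
  rintro ⟨x, z, hx, hz, hcross⟩
  have := eq_of_intCast_eq (n := n) (a := x) (b := z) (by rw [hx, hz]) (by omega) (by omega)
  omega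

end Arc

section Triangulations

variable {n : ℕ} {X : Set (Arc n)}

lemma PairwiseCompatible.finite [NeZero n] (hX : PairwiseCompatible n X) : X.Finite := by
  refine (((Set.finite_univ.prod (Set.finite_Iic n)).image fun p : ZMod n × ℕ =>
    Arc.inner p.1 p.2).union (Set.finite_univ.image Arc.proj)).subset ?_
  rintro (⟨i, t⟩ | c) hα
  · exact Or.inl ⟨(i, t), ⟨trivial, (hX.1 _ hα).2⟩, rfl⟩
  · exact Or.inr ⟨c, trivial, rfl⟩

namespace IsTriangulation

lemma mem_of_compatible (hX : IsTriangulation n X) {β : Arc n} (hβ : β.IsAdmissible)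
    (hββ : β.Compatible β) (h : ∀ α ∈ X, β.Compatible α) : β ∈ X := by
  have hpc : PairwiseCompatible n (insert β X) := by
    refine ⟨fun α hα => ?_, fun α hα α' hα' => ?_⟩
    · rcases hα with rfl | hα
      exacts [hβ, hX.1.1 α hα]
    · rcases hα with rfl | hα <;> rcases hα' with rfl | hα'
      exacts [hββ, h α' hα', (h α hα).symm, hX.1.2 α hα α' hα']
  exact hX.2 _ hpc (Set.subset_insert β X) ▸ Set.mem_insert β X

lemma exists_proj_mem {T : Finset (Arc n)} (hT : IsTriangulation n T) : ∃ c, Arc.proj c ∈ T := by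
  rcases T.eq_empty_or_nonempty with rfl | hne
  · exact ⟨0, hT.mem_of_compatible trivial trivial (by simp)⟩
  let length : Arc n → ℕ
    | .inner _ t => t
    | .proj _ => 0
  obtain ⟨α₀, hα₀, hmax⟩ := T.exists_max_image length hne
  rcases α₀ with ⟨i, t⟩ | c
  · refine ⟨i + t, hT.mem_of_compatible trivial trivial fun α hα => ?_⟩
    rcases α with ⟨k, s⟩ | c
    · rintro ⟨x, z, hx, hz, hxz, hzx⟩
      have hst : s ≤ t := hmax _ hα
      refine hT.1.2 _ hα₀ _ hα ⟨z - t, x, ?_, hx, Or.inl ⟨by omega, by omega, by omega⟩⟩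
      push_cast
      rw [hz, add_sub_cancel_right]
    · trivial
  · exact ⟨c, hα₀⟩

end IsTriangulation

end Triangulations

section Unfolding

variable {n : ℕ}

lemma cross_of_intCast_eq {q x z u l t s : ℤ} (hx : (x : ZMod n) = u) (hz : (z : ZMod n) = l)
    (hu : q ≤ u) (hut : u + t ≤ q + n) (hl : q ≤ l) (hls : l + s ≤ q + n)
    (h : Cross (x, x + t) (z, z + s)) : Cross (u, u + t) (l, l + s) := by
  have hw : ((z - x + u : ℤ) : ZMod n) = l := by push_cast; rw [hx, hz]; ring
  unfold Cross at h ⊢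
  have := eq_of_intCast_eq hw (by omega) (by omega)
  omega

lemma mem_Ioo_of_intCast_eq {q x z l s w : ℤ} (hx : (x : ZMod n) = l) (hz : (z : ZMod n) = w)
    (hl : q ≤ l) (hls : l + s ≤ q + n) (hw : q < w) (hw' : w ≤ q + n)
    (h : z ∈ Set.Ioo x (x + s)) : w ∈ Set.Ioo l (l + s) := by
  rw [Set.mem_Ioo] at h ⊢
  have hw'' : ((z - x + l : ℤ) : ZMod n) = w := by push_cast; rw [hx, hz]; ring
  have := eq_of_intCast_eq hw'' (by omega) (by omega)
  omega

namespace Arc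

def endLift (q : ℤ) (α : Arc n) : ℤ := windowLift n q α.terminal

/-- The chord carried by `α` in the polygon with vertices `q, …, p + 1` obtained by cutting the
punctured polygon open along the projective arc at `q`; the vertex `p + 1` plays the puncture. -/
def chord (q p : ℤ) : Arc n → ℤ × ℤ
  | inner i t => (endLift q (inner i t) - t, endLift q (inner i t))
  | proj c => (windowLift n q c, p + 1)

lemma chord_inner_fst_cast (q p : ℤ) (i : ZMod n) (t : ℕ) :
    (((inner i t).chord q p).1 : ZMod n) = i := by
  simp [chord, endLift, terminal]

variable [NeZero n]

lemma endLift_mem (q : ℤ) (α : Arc n) : q < α.endLift q ∧ α.endLift q ≤ q + n :=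
  windowLift_mem q _

lemma chord_inner_intCast {q p u : ℤ} {t : ℕ} (h₁ : q < u + t) (h₂ : u + t ≤ q + n) :
    (inner (u : ZMod n) t).chord q p = (u, u + t) := by
  have : (inner (u : ZMod n) t).endLift q = u + t := by
    rw [endLift, terminal, ← windowLift_intCast h₁ h₂]
    push_cast
    rfl
  simp [chord, this]

end Arc

open Arc

variable {X : Set (Arc n)} {q p : ℤ}

namespace PairwiseCompatible

lemma not_inside_chord_of_proj_mem (hX : PairwiseCompatible n X) {i c : ZMod n} {t : ℕ}
    (hα : inner i t ∈ X) (hc : proj c ∈ X) {z : ℤ} (hz : (z : ZMod n) = c) (q p : ℤ) :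
    ¬ (((inner i t).chord q p).1 < z ∧ z < ((inner i t).chord q p).2) := by
  intro h
  refine hX.2 _ hα _ hc ⟨_, z, chord_inner_fst_cast q p i t, hz, h.1, ?_⟩
  simp only [chord, sub_add_cancel] at h ⊢
  exact h.2

lemma not_cross_chord (hX : PairwiseCompatible n X) {α β : Arc n} (hα : α ∈ X) (hβ : β ∈ X)
    (hαp : α.endLift q ≤ p) (hβp : β.endLift q ≤ p) : ¬ Cross (α.chord q p) (β.chord q p) := by
  intro h
  rcases α with ⟨i, t⟩ | c <;> rcases β with ⟨k, s⟩ | d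
  · refine hX.2 _ hα _ hβ ⟨_, _, chord_inner_fst_cast q p i t, chord_inner_fst_cast q p k s, ?_⟩
    simp only [chord, Cross] at h ⊢
    omega
  · have := hX.not_inside_chord_of_proj_mem hα hβ (windowLift_cast q d) q p
    simp only [chord, Cross, endLift] at h this hαp
    omega
  · have := hX.not_inside_chord_of_proj_mem hβ hα (windowLift_cast q c) q p
    simp only [chord, Cross, endLift] at h this hβp
    omega
  · simp only [chord, Cross] at h
    omega

variable [NeZero n]

lemma le_chord_inner (hX : PairwiseCompatible n X) (hq : proj (q : ZMod n) ∈ X) {i : ZMod n}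
    {t : ℕ} (hα : inner i t ∈ X) (p : ℤ) : q ≤ ((inner i t).chord q p).1 := by
  have := endLift_mem q (inner i t)
  have := hX.not_inside_chord_of_proj_mem hα hq rfl q p
  simp only [chord] at this ⊢
  omega

end PairwiseCompatible

end Unfolding

section Chords

open Arc
open scoped Classical

variable {n : ℕ} {T : Finset (Arc n)} {q p : ℤ}

lemma chord_injOn (q p : ℤ) : Set.InjOn (chord q p) {α : Arc n | α.endLift q ≤ p} := by
  rintro (⟨i, t⟩ | c) hα (⟨k, s⟩ | d) hβ h
  · have hik := chord_inner_fst_cast q p i t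
    rw [congrArg Prod.fst h, chord_inner_fst_cast] at hik
    simp only [chord, Prod.mk.injEq] at h
    have hts : t = s := by omega
    rw [hik, hts]
  · simp only [chord, Prod.mk.injEq] at h
    simp only [Set.mem_ofPred_eq] at hα
    omega
  · simp only [chord, Prod.mk.injEq] at h
    simp only [Set.mem_ofPred_eq] at hβ
    omega
  · simp only [chord, Prod.mk.injEq] at h
    simpa using congrArg (fun z : ℤ => (z : ZMod n)) h.1

variable [NeZero n]

/-- The outer edge `(q, p + 1)` stands for the projective arc at `q`; the projective arc at `p`
would be the edge `(p, p + 1)` of the polygon and is left out. -/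
noncomputable def chords (T : Finset (Arc n)) (q p : ℤ) : Finset (ℤ × ℤ) :=
  insert (q, p + 1) (((T.filter (·.endLift q ≤ p)).erase (proj p)).image (chord q p))

lemma card_chords :
    (chords T q p).card = ((T.filter (·.endLift q ≤ p)).erase (proj p)).card + 1 := by
  rw [chords, Finset.card_insert_of_notMem, Finset.card_image_of_injOn]
  · exact (chord_injOn q p).mono fun α hα => (Finset.mem_filter.1 (Finset.mem_of_mem_erase hα)).2
  · simp only [Finset.mem_image, not_exists, not_and]
    rintro (⟨i, t⟩ | c) hα h
    · have := (Finset.mem_filter.1 (Finset.mem_of_mem_erase hα)).2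
      simp only [chord, Prod.mk.injEq] at h this
      omega
    · have := endLift_mem q (proj c)
      simp only [chord, Prod.mk.injEq, endLift, terminal] at h this
      omega

lemma isDissection_chords (hT : PairwiseCompatible n T) (hq : proj (q : ZMod n) ∈ T)
    (hqp : q < p) : IsDissection q (p + 1) (chords T q p) := by
  refine IsDissection.insert_outer ⟨?_, ?_⟩ (by omega)
  · simp only [Finset.mem_image, Finset.mem_erase, Finset.mem_filter]
    rintro _ ⟨α, ⟨hne, hα, hαp⟩, rfl⟩
    rcases α with ⟨i, t⟩ | c
    · have hqi := hT.le_chord_inner hq hα p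
      have ht := (hT.1 _ hα).1
      simp only [chord, endLift] at hqi hαp ⊢
      omega
    · have hcp : windowLift n q c ≠ p := fun h => hne (by rw [← h, windowLift_cast])
      have := endLift_mem q (proj c)
      simp only [chord, endLift, terminal] at this hαp ⊢
      omega
  · simp only [Finset.mem_image, Finset.mem_erase, Finset.mem_filter]
    rintro _ ⟨α, ⟨-, hα, hαp⟩, rfl⟩ _ ⟨β, ⟨-, hβ, hβp⟩, rfl⟩
    exact hT.not_cross_chord hα hβ hαp hβp

lemma chord_mem_chords {α : Arc n} (hα : α ∈ T) (hne : α ≠ proj (q + n : ℤ)) :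
    α.chord q (q + n) ∈ chords T q (q + n) :=
  Finset.mem_insert_of_mem <| Finset.mem_image_of_mem _ <|
    Finset.mem_erase.2 ⟨hne, Finset.mem_filter.2 ⟨hα, (endLift_mem q α).2⟩⟩

lemma compatible_inner_of_forall_not_cross (hT : PairwiseCompatible n T)
    (hq : proj (q : ZMod n) ∈ T) {u : ℤ} {t : ℕ} (hu : q ≤ u) (hut : u + t ≤ q + n)
    (hfree : ∀ J ∈ chords T q (q + n), ¬ Cross (u, u + t) J) :
    ∀ α ∈ T, (inner (u : ZMod n) t).Compatible α := by
  rintro (⟨k, s⟩ | c) hα ⟨x, z, hx, hz, h⟩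
  · have hls := (endLift_mem q (inner k s)).2
    have hcross := cross_of_intCast_eq hx (hz.trans (chord_inner_fst_cast q (q + n) k s).symm) hu
      hut (hT.le_chord_inner hq hα _) (s := s) (by simp only [chord]; omega) h
    refine hfree _ (chord_mem_chords hα (by simp)) ?_
    simp only [Cross, chord] at hcross ⊢
    omega
  · have hw := endLift_mem q (proj c)
    obtain ⟨h₁, h₂⟩ :=
      mem_Ioo_of_intCast_eq hx (hz.trans (windowLift_cast q c).symm) hu hut hw.1 hw.2 h
    have hne : proj c ≠ proj ((q + n : ℤ) : ZMod n) := by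
      rintro ⟨⟩
      rw [windowLift_intCast (by omega) le_rfl] at h₂
      omega
    exact hfree _ (chord_mem_chords hα hne) (Or.inl ⟨h₁, h₂, by simp only [chord]; omega⟩)

lemma compatible_proj_of_forall_not_cross (hT : PairwiseCompatible n T)
    (hq : proj (q : ZMod n) ∈ T) {u : ℤ} (hu : q < u) (hu' : u ≤ q + n)
    (hfree : ∀ J ∈ chords T q (q + n), ¬ Cross (u, q + n + 1) J) :
    ∀ α ∈ T, (proj (u : ZMod n)).Compatible α := by
  rintro (⟨k, s⟩ | c) hα
  · rintro ⟨x, z, hx, hz, h⟩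
    have hls := (endLift_mem q (inner k s)).2
    obtain ⟨h₁, h₂⟩ := mem_Ioo_of_intCast_eq (hx.trans (chord_inner_fst_cast q (q + n) k s).symm)
      hz (hT.le_chord_inner hq hα _) (s := s) (by simp only [chord]; omega) hu hu' h
    refine hfree _ (chord_mem_chords hα (by simp)) (Or.inr ⟨h₁, ?_, ?_⟩) <;>
      simp only [chord] at h₂ hls ⊢ <;> omega
  · trivial

lemma isSaturated_chords (hT : IsTriangulation n T) (hq : proj (q : ZMod n) ∈ T) :
    IsSaturated q (q + n + 1) (chords T q (q + n)) := by
  intro u v hu huv hv hnot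
  by_contra! hfree
  rcases lt_or_eq_of_le hv with hv | rfl
  · obtain ⟨t, rfl⟩ : ∃ t : ℕ, v = u + t := ⟨(v - u).toNat, by omega⟩
    have hut : u + t ≤ q + n := by omega
    have hβ : inner (u : ZMod n) t ∈ T := hT.mem_of_compatible ⟨by omega, by omega⟩
      (compatible_inner_self (by omega))
      (compatible_inner_of_forall_not_cross hT.1 hq hu hut hfree)
    refine hnot ?_
    rw [← chord_inner_intCast (q := q) (p := q + n) (u := u) (t := t) (by omega) (by omega)]
    exact chord_mem_chords hβ (by simp)
  · obtain rfl | hu := eq_or_lt_of_le hu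
    · exact hnot (Finset.mem_insert_self _ _)
    have hβ : proj (u : ZMod n) ∈ T := hT.mem_of_compatible trivial trivial
      (compatible_proj_of_forall_not_cross hT.1 hq hu (by omega) hfree)
    refine hnot ?_
    have hchord : (proj (u : ZMod n)).chord q (q + n) = (u, q + n + 1) := by
      simp only [chord, windowLift_intCast hu (by omega : u ≤ q + n)]
    rw [← hchord]
    refine chord_mem_chords hβ fun h => ?_
    have := congrArg (windowLift n q) (proj.inj h)
    rw [windowLift_intCast hu (by omega), windowLift_intCast (by omega) le_rfl] at this
    omega

end Chords

section Counting

open Arc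
open scoped Classical

variable {n : ℕ} {T : Finset (Arc n)} {q p : ℤ}

lemma topSeq_coe (T : Finset (Arc n)) (c : ZMod n) :
    topSeq n T c = (T.filter (·.terminal = c)).card := by
  rw [topSeq, ← Set.ncard_coe_finset, Finset.coe_filter]
  rfl

variable [NeZero n]

lemma card_erase_filter_endLift_lt (hT : PairwiseCompatible n T) (hq : proj (q : ZMod n) ∈ T)
    (hqp : q < p) : (((T.filter (·.endLift q ≤ p)).erase (proj p)).card : ℤ) < p - q := by
  have := (isDissection_chords hT hq hqp).card_le (by omega)
  rw [card_chords] at this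
  push_cast at this
  omega

lemma card_filter_endLift_le (hT : PairwiseCompatible n T) (hq : proj (q : ZMod n) ∈ T)
    (hqp : q < p) : ((T.filter (·.endLift q ≤ p)).card : ℤ) ≤ p - q := by
  have := card_erase_filter_endLift_lt hT hq hqp
  have := Finset.pred_card_le_card_erase (s := T.filter (·.endLift q ≤ p)) (a := proj p)
  omega

lemma card_filter_endLift_lt (hT : PairwiseCompatible n T) (hq : proj (q : ZMod n) ∈ T)
    (hqp : q < p) (hp : proj (p : ZMod n) ∉ T) :
    ((T.filter (·.endLift q ≤ p)).card : ℤ) < p - q := by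
  rw [← Finset.erase_eq_of_notMem fun h => hp (Finset.mem_filter.1 h).1]
  exact card_erase_filter_endLift_lt hT hq hqp

lemma card_eq_of_isTriangulation (hT : IsTriangulation n T) (hq : proj (q : ZMod n) ∈ T) :
    T.card = n := by
  have hn : (0 : ℤ) < n := by exact_mod_cast Nat.pos_of_neZero n
  have hall : T.filter (·.endLift q ≤ q + n) = T :=
    Finset.filter_true_of_mem fun α _ => (endLift_mem q α).2
  have hlow :=
    (isDissection_chords hT.1 hq (p := q + n) (by omega)).le_card (isSaturated_chords hT hq)
  have hup := card_filter_endLift_le hT.1 hq (p := q + n) (by omega)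
  have hqn : proj ((q + n : ℤ) : ZMod n) = proj (q : ZMod n) := by simp
  rw [card_chords, hall, hqn, Finset.card_erase_add_one hq] at hlow
  rw [hall] at hup
  omega

lemma endLift_gt_iff {α : Arc n} (hqp : q < p) :
    p < α.endLift q ↔ α.endLift p ≤ q + n := by
  have hq := endLift_mem q α
  have hp := endLift_mem p α
  have hcast : ((α.endLift p : ℤ) : ZMod n) = (α.endLift q : ℤ) := by simp [endLift]
  constructor
  · intro h
    have := eq_of_intCast_eq hcast (by omega) (by omega)
    omega
  · intro h
    by_contra! h'
    have hcast' : ((α.endLift p : ℤ) : ZMod n) = ((α.endLift q + n : ℤ) : ZMod n) := by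
      simp [hcast]
    have := eq_of_intCast_eq hcast' (by omega) (by omega)
    omega

lemma card_filter_endLift_eq (hT : IsTriangulation n T) (hq : proj (q : ZMod n) ∈ T)
    (hqp : q < p) (hpq : p ≤ q + n) (hp : proj (p : ZMod n) ∈ T) :
    ((T.filter (·.endLift q ≤ p)).card : ℤ) = p - q := by
  have hcard := card_eq_of_isTriangulation hT hq
  rcases hpq.lt_or_eq with hpq | rfl
  -- the arcs ending beyond `p` are counted from the projective arc at `p`
  · have hrest : T.filter (fun α => ¬ α.endLift q ≤ p) = T.filter (·.endLift p ≤ q + n) :=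
      Finset.filter_congr fun α _ => not_le.trans (endLift_gt_iff hqp)
    have hup := card_filter_endLift_le hT.1 hp hpq
    have := Finset.card_filter_add_card_filter_not (s := T) (·.endLift q ≤ p)
    rw [hrest] at this
    have := card_filter_endLift_le hT.1 hq hqp
    omega
  · rw [Finset.filter_true_of_mem fun α _ => (endLift_mem q α).2, hcard]
    ring

lemma card_filter_endLift_eq_sum (hpq : p ≤ q + n) :
    (T.filter (·.endLift q ≤ p)).card = ∑ b ∈ Finset.Ioc q p, topSeq n T b := by
  rw [Finset.card_eq_sum_card_fiberwise (f := (·.endLift q)) (t := Finset.Ioc q p)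
    fun α hα => Finset.mem_Ioc.2 ⟨(endLift_mem q α).1, (Finset.mem_filter.1 hα).2⟩]
  refine Finset.sum_congr rfl fun b hb => ?_
  rw [topSeq_coe, Finset.filter_filter]
  refine congrArg Finset.card (Finset.filter_congr fun α _ => ⟨?_, fun h => ?_⟩)
  · rintro ⟨-, rfl⟩
    simp [endLift]
  · have hb := Finset.mem_Ioc.1 hb
    have : b = α.endLift q := eq_windowLift h.symm hb.1 (by omega)
    exact ⟨this.symm.trans_le hb.2, this.symm⟩

lemma sum_Icc_natCast_eq_sum_univ {M : Type*} [AddCommMonoid M] (g : ZMod n → M) :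
    ∑ j ∈ Finset.Icc 1 n, g j = ∑ c, g c := by
  refine Finset.sum_nbij (fun j : ℕ => (j : ZMod n)) (by simp) ?_ ?_ fun _ _ => rfl
  · intro a ha b hb h
    simp only [Finset.coe_Icc, Set.mem_Icc] at ha hb
    have := eq_of_intCast_eq (n := n) (a := a) (b := b) (by simpa using h) (by omega) (by omega)
    omega
  · intro c _
    have := windowLift_mem 0 c
    refine ⟨(windowLift n 0 c).toNat, by simp only [Finset.coe_Icc, Set.mem_Icc]; omega, ?_⟩
    have hc := windowLift_cast 0 c
    rwa [← Int.toNat_of_nonneg (by omega : 0 ≤ windowLift n 0 c), Int.cast_natCast] at hc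

lemma sum_topSeq (T : Finset (Arc n)) : ∑ j ∈ Finset.Icc 1 n, topSeq n T j = T.card := by
  rw [sum_Icc_natCast_eq_sum_univ, Finset.card_eq_sum_card_fiberwise (f := Arc.terminal)
    (t := Finset.univ) fun _ _ => Finset.mem_coe.2 (Finset.mem_univ _)]
  simp only [topSeq_coe]

end Counting

section PartialSums

variable {n : ℕ} [NeZero n] {a : ZMod n → ℕ}

lemma resRep_mem (p : ℤ) : 1 ≤ resRep n p ∧ resRep n p ≤ n := by
  have hn : (0 : ℤ) < n := by exact_mod_cast Nat.pos_of_neZero n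
  have := Int.emod_nonneg (p - 1) hn.ne'
  have := Int.emod_lt_of_pos (p - 1) hn
  unfold resRep
  omega

lemma resRep_cast (p : ℤ) : ((resRep n p : ℕ) : ZMod n) = p := by
  have hn : (0 : ℤ) < n := by exact_mod_cast Nat.pos_of_neZero n
  have hcast : ((resRep n p : ℕ) : ℤ) = (p - 1) % n + 1 := by
    have := Int.emod_nonneg (p - 1) hn.ne'
    unfold resRep
    omega
  rw [← Int.cast_natCast, hcast, Int.emod_def]
  simp

lemma resRep_eq {p : ℤ} {r : ℕ} (h₁ : 1 ≤ r) (h₂ : r ≤ n) (h : (r : ZMod n) = p) :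
    resRep n p = r := by
  have := resRep_mem (n := n) p
  have := eq_of_intCast_eq (n := n) (a := resRep n p) (b := r) (by simp [resRep_cast, h])
    (by omega) (by omega)
  omega

lemma resRep_add_one (p : ℤ) :
    resRep n (p + 1) = if resRep n p = n then 1 else resRep n p + 1 := by
  have hp := resRep_cast (n := n) p
  have := resRep_mem (n := n) p
  split_ifs with h
  · rw [h, ZMod.natCast_self] at hp
    exact resRep_eq le_rfl (Nat.pos_of_neZero n) (by simp [← hp])
  · exact resRep_eq (by omega) (by omega) (by push_cast; rw [hp])

lemma psum_congr {p p' : ℤ} (h : (p : ZMod n) = p') : psum n a p = psum n a p' := by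
  have := resRep_mem (n := n) p
  rw [psum, psum, resRep_eq (p := p') this.1 this.2 (by rw [resRep_cast, h])]

lemma psum_add_one (htot : ∑ j ∈ Finset.Icc 1 n, ((a j : ℤ) - 1) = 0) (p : ℤ) :
    psum n a (p + 1) = psum n a p + ((a (p + 1 : ℤ) : ℤ) - 1) := by
  have hp := resRep_cast (n := n) p
  have hp1 := resRep_cast (n := n) (p + 1)
  unfold psum at *
  rw [resRep_add_one]
  split_ifs with h
  · rw [h] at hp
    rw [h, htot, ← hp1, resRep_add_one, if_pos h]
    simp
  · rw [Finset.sum_Icc_succ_top (by omega), ← hp1, resRep_add_one, if_neg h]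

lemma psum_sub_psum (htot : ∑ j ∈ Finset.Icc 1 n, ((a j : ℤ) - 1) = 0) {q p : ℤ}
    (hqp : q ≤ p) :
    psum n a p - psum n a q = ∑ b ∈ Finset.Ioc q p, ((a b : ℤ) - 1) := by
  induction p, hqp using Int.leInduction with
  | base => simp
  | succ p hqp ih =>
    rw [psum_add_one htot, ← Finset.insert_Ioc_right_eq_Ioc_add_one hqp,
      Finset.sum_insert (by simp), ← ih]
    ring

end PartialSums

section Main

open Arc

variable {n : ℕ} [NeZero n] {T : Finset (Arc n)} {q : ℤ}

lemma sum_topSeq_sub_one (hT : IsTriangulation n T) (hq : proj (q : ZMod n) ∈ T) :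
    ∑ j ∈ Finset.Icc 1 n, ((topSeq n T j : ℤ) - 1) = 0 := by
  rw [Finset.sum_sub_distrib, ← Nat.cast_sum, sum_topSeq, card_eq_of_isTriangulation hT hq]
  simp

lemma psum_sub_psum_eq_card (hT : IsTriangulation n T) (hq : proj (q : ZMod n) ∈ T) {p : ℤ}
    (hqp : q ≤ p) (hpq : p ≤ q + n) :
    psum n (topSeq n T) p - psum n (topSeq n T) q =
      (T.filter (·.endLift q ≤ p)).card - (p - q) := by
  rw [psum_sub_psum (sum_topSeq_sub_one hT hq) hqp, Finset.sum_sub_distrib,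
    card_filter_endLift_eq_sum hpq, Nat.cast_sum, Finset.sum_const, Int.card_Ioc,
    nsmul_eq_mul, mul_one, Int.toNat_of_nonneg (by omega)]

lemma psum_le_psum_and_eq_iff (hT : IsTriangulation n T) (hq : proj (q : ZMod n) ∈ T)
    (p : ℤ) : psum n (topSeq n T) p ≤ psum n (topSeq n T) q ∧
      (psum n (topSeq n T) p = psum n (topSeq n T) q ↔ proj (p : ZMod n) ∈ T) := by
  obtain ⟨w, hw, hqw, hwq⟩ : ∃ w : ℤ, (w : ZMod n) = p ∧ q < w ∧ w ≤ q + n :=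
    ⟨_, windowLift_cast q (p : ZMod n), windowLift_mem q (p : ZMod n)⟩
  rw [← psum_congr hw, ← hw]
  have hdiff := psum_sub_psum_eq_card hT hq hqw.le hwq
  by_cases hp : proj (w : ZMod n) ∈ T
  · have := card_filter_endLift_eq hT hq hqw hwq hp
    exact ⟨by omega, iff_of_true (by omega) hp⟩
  · have := card_filter_endLift_lt hT.1 hq hqw hp
    exact ⟨by omega, iff_of_false (by omega) hp⟩

lemma pnorm_eq_psum (hT : IsTriangulation n T) (hq : proj (q : ZMod n) ∈ T) :
    pnorm n (topSeq n T) = psum n (topSeq n T) q := by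
  refine IsGreatest.csSup_eq ⟨⟨resRep n q, resRep_mem q, psum_congr ?_⟩, ?_⟩
  · simpa using resRep_cast q
  · rintro _ ⟨i, -, rfl⟩
    exact (psum_le_psum_and_eq_iff hT hq i).1

end Main

theorem proj_mem_iff_psum_eq_pnorm_general (n : ℕ) (hn : 0 < n)
    (X : Set (Arc n)) (hX : IsTriangulation n X)
    (j : ℕ) :
    Arc.proj ((j : ℕ) : ZMod n) ∈ X ↔
      psum n (topSeq n X) (j : ℤ) = pnorm n (topSeq n X) := by
  have : NeZero n := ⟨hn.ne'⟩
  obtain ⟨T, rfl⟩ := hX.1.finite.exists_finset_coe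
  obtain ⟨c, hc⟩ := hX.exists_proj_mem
  obtain ⟨q, rfl⟩ := ZMod.intCast_surjective c
  rw [pnorm_eq_psum hX hc, (psum_le_psum_and_eq_iff hX hc j).2]
  simp

/-- **Adachi, Lemma (newlem1)(1).** Let `X` be a triangulation of the
punctured `n`-gon and `a := top(X)`. For every `j ∈ {1, …, n}`, the
projective arc at the residue class of `j` belongs to `X` if and only if
`a'_j = ‖a'‖`. -/
theorem proj_mem_iff_psum_eq_pnorm (n : ℕ) (hn : 0 < n)
    (X : Set (Arc n)) (hX : IsTriangulation n X)
    (j : ℕ) (hj : j ∈ Finset.Icc 1 n) :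
    Arc.proj ((j : ℕ) : ZMod n) ∈ X ↔
      psum n (topSeq n X) (j : ℤ) = pnorm n (topSeq n X) :=
  proj_mem_iff_psum_eq_pnorm_general n hn X hX j

end Punctured
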